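/- Let 0 < a < 1, let α := −Φ⁻¹(a) (so that ∫_α^∞ γ₁(x) dx = a), and let 0 ≤ β < 1. Then ∫_α^∞ Φ((βx − α)/√(1−β²)) γ₁(x) dx ≥ a · min(1/2, a) ≥ a²/2. -/
import Mathlib


open MeasureTheory Real Set Filter

noncomputable section

/-- Standard Gaussian density on `ℝ`. -/
def gauss1 (x : ℝ) : ℝ := (2 * π) ^ (-(1 : ℝ) / 2) * Real.exp (-x ^ 2 / 2)

/-- The standard Gaussian cumulative distribution function. -/
def Phi (t : ℝ) : ℝ := ∫ s in Iio t, gauss1 s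

lemma gauss1_eq (x : ℝ) : gauss1 x = (Real.sqrt (2*π))⁻¹ * Real.exp (-x^2/2) := by
  rw [gauss1, Real.sqrt_eq_rpow, ← Real.rpow_neg (le_of_lt Real.two_pi_pos)]
  norm_num

lemma gauss1_nonneg (x : ℝ) : 0 ≤ gauss1 x := by
  rw [gauss1_eq]; positivity

lemma gauss1_neg (x : ℝ) : gauss1 (-x) = gauss1 x := by simp [gauss1]

lemma gauss1_continuous : Continuous gauss1 := by
  unfold gauss1; continuity

lemma integrable_gauss1 : Integrable gauss1 := by
  have h1 : Integrable (fun x : ℝ => Real.exp (-(1/2 : ℝ) * x ^ 2)) :=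
    integrable_exp_neg_mul_sq (by norm_num)
  have h : gauss1 = fun x => (2 * π) ^ (-(1:ℝ)/2) * Real.exp (-(1/2:ℝ) * x^2) := by
    funext x; rw [gauss1]; congr 1; ring
  rw [h]; exact h1.const_mul _

lemma integral_gauss1 : ∫ x, gauss1 x = 1 := by
  have h : ∫ x : ℝ, Real.exp (-(1/2:ℝ) * x ^ 2) = Real.sqrt (2*π) := by
    rw [integral_gaussian]
    norm_num [mul_comm]
  calc ∫ x, gauss1 x = (Real.sqrt (2*π))⁻¹ * ∫ x : ℝ, Real.exp (-(1/2:ℝ) * x ^ 2) := by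
        rw [← integral_const_mul]; congr 1; funext x; rw [gauss1_eq]; congr 1; ring
    _ = 1 := by
        rw [h]
        field_simp

lemma Phi_nonneg (t : ℝ) : 0 ≤ Phi t :=
  setIntegral_nonneg measurableSet_Iio (fun x _ => gauss1_nonneg x)

lemma Phi_le_one (t : ℝ) : Phi t ≤ 1 := by
  rw [← integral_gauss1, Phi]
  exact setIntegral_le_integral integrable_gauss1 (ae_of_all _ gauss1_nonneg)

lemma Phi_mono : Monotone Phi := fun s t hst =>
  setIntegral_mono_set integrable_gauss1.integrableOn (ae_of_all _ gauss1_nonneg)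
    (HasSubset.Subset.eventuallyLE (Iio_subset_Iio hst))

lemma integral_Ici_gauss1_symm (c : ℝ) : ∫ x in Ici c, gauss1 x = Phi (-c) := by
  have h := integral_comp_neg_Ioi c gauss1
  simp_rw [gauss1_neg] at h
  rw [integral_Ici_eq_integral_Ioi, h, integral_Iic_eq_integral_Iio, Phi]

lemma integral_Ici_zero_gauss1 : ∫ x in Ici (0:ℝ), gauss1 x = 1/2 := by
  have hsym : ∫ x in Ici (0:ℝ), gauss1 x = Phi 0 := by
    rw [integral_Ici_gauss1_symm]; norm_num
  have hsplit : Phi 0 + ∫ x in Ici (0:ℝ), gauss1 x = 1 := by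
    rw [Phi, ← integral_gauss1]
    exact intervalIntegral.integral_Iio_add_Ici integrable_gauss1.integrableOn integrable_gauss1.integrableOn
  linarith [hsym, hsplit]

/-- The half-space penalty integral is bounded below: with `α := −Φ⁻¹(a)` (so that
`γ₁([α,∞)) = a`), one has `∫_α^∞ Φ((βx−α)/√(1−β²)) γ₁(x) dx ≥ a·min(1/2,a) ≥ a²/2`. -/
theorem halfspace_penalty_lower_bound
    (a β α : ℝ) (ha0 : 0 < a) (ha1 : a < 1) (hβ0 : 0 ≤ β) (hβ1 : β < 1)
    (hα : ∫ x in Ici α, gauss1 x = a) :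
    a * min (1 / 2) a ≤ ∫ x in Ici α, Phi ((β * x - α) / Real.sqrt (1 - β ^ 2)) * gauss1 x ∧
    a ^ 2 / 2 ≤ a * min (1 / 2) a := by
  constructor
  · set s := Real.sqrt (1 - β ^ 2) with hs
    have hβ2 : 0 < 1 - β ^ 2 := by nlinarith
    have hs0 : 0 < s := Real.sqrt_pos.mpr hβ2
    have hs1 : s ≤ 1 := by
      calc s ≤ Real.sqrt 1 := Real.sqrt_le_sqrt (by nlinarith)
        _ = 1 := Real.sqrt_one
    have h1β : 1 - β ≤ s := by
      rw [hs, show (1:ℝ) - β = Real.sqrt ((1-β)^2) by rw [Real.sqrt_sq (by linarith)]]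
      exact Real.sqrt_le_sqrt (by nlinarith)
    -- pointwise lower bound on [max α 0, ∞)
    have key : ∀ x, max α 0 ≤ x → a ≤ Phi ((β * x - α) / s) := by
      intro x hx
      have harg : -α ≤ (β * x - α) / s := by
        rw [le_div_iff₀ hs0]
        rcases le_or_gt α 0 with hα0 | hα0
        · have hx0 : 0 ≤ x := le_trans (le_max_right _ _) hx
          nlinarith [mul_nonneg hβ0 hx0, mul_nonneg (neg_nonneg.2 hα0) (by linarith : (0:ℝ) ≤ 1 - s)]
        · have hxα : α ≤ x := le_trans (le_max_left _ _) hx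
          nlinarith [mul_le_mul_of_nonneg_left hxα hβ0,
            mul_le_mul_of_nonneg_left h1β (le_of_lt hα0)]
      calc a = Phi (-α) := by rw [← hα, integral_Ici_gauss1_symm]
        _ ≤ _ := Phi_mono harg
    -- measurability and integrability of the integrand
    have hmeasg : Measurable fun x : ℝ => (β * x - α) / s := by fun_prop
    have hmeas : Measurable fun x => Phi ((β * x - α) / s) * gauss1 x :=
      (Phi_mono.measurable.comp hmeasg).mul gauss1_continuous.measurable
    have hint : Integrable (fun x => Phi ((β * x - α) / s) * gauss1 x) := by
      refine integrable_gauss1.mono' hmeas.aestronglyMeasurable (ae_of_all _ fun x => ?_)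
      rw [Real.norm_eq_abs, abs_of_nonneg (mul_nonneg (Phi_nonneg _) (gauss1_nonneg _))]
      nlinarith [Phi_le_one ((β * x - α)/s), Phi_nonneg ((β * x - α)/s), gauss1_nonneg x]
    -- the tail mass of [max α 0, ∞) is min (1/2) a
    have hmin : ∫ x in Ici (max α 0), gauss1 x = min (1/2) a := by
      rcases le_total 0 α with h0α | hα0
      · rw [max_eq_left h0α, hα]
        have hle : a ≤ 1/2 := by
          rw [← hα, ← integral_Ici_zero_gauss1]
          exact setIntegral_mono_set integrable_gauss1.integrableOn (ae_of_all _ gauss1_nonneg)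
            (HasSubset.Subset.eventuallyLE (Ici_subset_Ici.mpr h0α))
        rw [min_eq_right hle]
      · rw [max_eq_right hα0, integral_Ici_zero_gauss1]
        have hle : 1/2 ≤ a := by
          rw [← hα, ← integral_Ici_zero_gauss1]
          exact setIntegral_mono_set integrable_gauss1.integrableOn (ae_of_all _ gauss1_nonneg)
            (HasSubset.Subset.eventuallyLE (Ici_subset_Ici.mpr hα0))
        rw [min_eq_left hle]
    calc a * min (1/2) a = ∫ x in Ici (max α 0), a * gauss1 x := by
          rw [integral_const_mul, hmin]
      _ ≤ ∫ x in Ici (max α 0), Phi ((β * x - α) / s) * gauss1 x := by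
          refine setIntegral_mono_on ((integrable_gauss1.const_mul a).integrableOn)
            hint.integrableOn measurableSet_Ici (fun x hx => ?_)
          exact mul_le_mul_of_nonneg_right (key x hx) (gauss1_nonneg x)
      _ ≤ ∫ x in Ici α, Phi ((β * x - α) / s) * gauss1 x :=
          setIntegral_mono_set hint.integrableOn
            (ae_of_all _ fun x => mul_nonneg (Phi_nonneg _) (gauss1_nonneg _))
            (HasSubset.Subset.eventuallyLE (Ici_subset_Ici.mpr (le_max_left _ _)))
  · have hmin : a / 2 ≤ min (1/2) a := by
      rcases le_total a (1/2) with h | h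
      · rw [min_eq_right h]; linarith
      · rw [min_eq_left h]; linarith
    nlinarith
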